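/- In a free-choice net, if there is a path from a place p to a place q that lies in a cluster C, then there is a C-rooted disentangled path starting in p, i.e., a path ⟨p_1,t_1,p_2,...,t_{n-1},p_n⟩ with p_1 = p, p_n ∈ C, and all places p_1,...,p_n lying in pairwise distinct clusters. -/

import Mathlib

open scoped Classical

/-- A Petri net over places `P` and transitions `T`, given by preset and postset
of each transition (this encodes the flow relation `F`). -/
structure PetriNet (P T : Type) where
  pre : T → Finset P
  post : T → Finset P

namespace PetriNet

variable {P T : Type} [DecidableEq P] (N : PetriNet P T)

/-- A transition is enabled if each input place holds at least one token. -/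
def enabled (M : P → ℕ) (t : T) : Prop := ∀ p ∈ N.pre t, 1 ≤ M p

/-- Firing a transition. -/
def fire (M : P → ℕ) (t : T) : P → ℕ :=
  fun p => M p - (if p ∈ N.pre t then 1 else 0) + (if p ∈ N.post t then 1 else 0)

/-- `Fires M σ M'` : the firing sequence σ is enabled in M and leads to M'. -/
inductive Fires : (P → ℕ) → List T → (P → ℕ) → Prop
  | nil (M : P → ℕ) : Fires M [] M
  | cons {M : P → ℕ} {t : T} {σ : List T} {M'' : P → ℕ} :
      N.enabled M t → Fires (N.fire M t) σ M'' → Fires M (t :: σ) M''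

/-- Reachability of markings. -/
def Reach (M M' : P → ℕ) : Prop := ∃ σ : List T, N.Fires M σ M'

/-- The set of transitions enabled in a marking. -/
def en (M : P → ℕ) : Set T := {t | N.enabled M t}

/-- Lucency: reachable markings are determined by their sets of enabled transitions. -/
def Lucent (M : P → ℕ) : Prop :=
  ∀ M1 M2 : P → ℕ, N.Reach M M1 → N.Reach M M2 → N.en M1 = N.en M2 → M1 = M2

/-- Free-choice: presets of any two transitions are equal or disjoint. -/
def FreeChoice : Prop :=
  ∀ t1 t2 : T, N.pre t1 = N.pre t2 ∨ N.pre t1 ∩ N.pre t2 = ∅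

/-- Proper: every transition has a nonempty preset and postset. -/
def Proper : Prop := ∀ t : T, (N.pre t).Nonempty ∧ (N.post t).Nonempty

/-- The directed edge (flow) relation on nodes `P ⊕ T`. -/
def edge : (P ⊕ T) → (P ⊕ T) → Prop
  | Sum.inl p, Sum.inr t => p ∈ N.pre t
  | Sum.inr t, Sum.inl p => p ∈ N.post t
  | _, _ => False

/-- `InCluster x y` : y is in the cluster of x (smallest set containing x closed
under adding output transitions of places and input places of transitions). -/
inductive InCluster : (P ⊕ T) → (P ⊕ T) → Prop
  | refl (x : P ⊕ T) : InCluster x x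
  | toTrans {x : P ⊕ T} {p : P} {t : T} :
      InCluster x (Sum.inl p) → p ∈ N.pre t → InCluster x (Sum.inr t)
  | toPlace {x : P ⊕ T} {t : T} {p : P} :
      InCluster x (Sum.inr t) → p ∈ N.pre t → InCluster x (Sum.inl p)

/-- The cluster of a node. -/
def cluster (x : P ⊕ T) : Set (P ⊕ T) := {y | N.InCluster x y}

/-- A set of nodes is a cluster if it is the cluster of some node. -/
def IsCluster (C : Set (P ⊕ T)) : Prop := ∃ x : P ⊕ T, C = N.cluster x

/-- `Mrk(C)` : one token on each place of `C`, no tokens elsewhere. -/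
noncomputable def clusterMrk (C : Set (P ⊕ T)) : P → ℕ :=
  fun p => if Sum.inl p ∈ C then 1 else 0

/-- A home marking is reachable from every reachable marking. -/
def IsHomeMarking (M MH : P → ℕ) : Prop := ∀ M', N.Reach M M' → N.Reach M' MH

/-- A home cluster is a cluster whose marking `Mrk(C)` is a home marking. -/
def HomeCluster (M : P → ℕ) (C : Set (P ⊕ T)) : Prop :=
  N.IsCluster C ∧ N.IsHomeMarking M (clusterMrk C)

/-- A conflict-pair for `(N,M)`. -/
def ConflictPair (M M1 M2 : P → ℕ) : Prop :=
  N.Reach M M1 ∧ N.Reach M M2 ∧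
  (∃ t, N.enabled M1 t) ∧ (∃ t, N.enabled M2 t) ∧
  (∀ t, ¬ (N.enabled M1 t ∧ N.enabled M2 t)) ∧
  (∀ t, N.enabled M1 t → ∃ p ∈ N.pre t, 1 ≤ M2 p) ∧
  (∀ t, N.enabled M2 t → ∃ p ∈ N.pre t, 1 ≤ M1 p)

/-- A disentangled path `⟨p_1,t_1,p_2,…,t_{n-1},p_n⟩`, given by its lists of
places and transitions: consecutive nodes are connected by the flow relation and
all places lie in pairwise distinct clusters. -/
def IsDisPath (ps : List P) (ts : List T) : Prop :=
  ps.length = ts.length + 1 ∧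
  (∀ (i : ℕ) (t : T) (p p' : P), ts[i]? = some t → ps[i]? = some p →
      ps[i + 1]? = some p' → p ∈ N.pre t ∧ p' ∈ N.post t) ∧
  ps.Pairwise (fun a b => N.cluster (Sum.inl a) ≠ N.cluster (Sum.inl b))

/-- `Exp M σ σ'` : σ' is obtained from σ by repeatedly expediting transitions
(moving the transition at position j to an earlier position i, provided the
prefix of length i followed by that transition is enabled from M and no
transition at positions i..j-1 shares its cluster). -/
inductive Exp (M : P → ℕ) (σ : List T) : List T → Prop
  | refl : Exp M σ σ
  | step {σ' : List T} {i j : ℕ} (h : Exp M σ σ') (hij : i < j) (hj : j < σ'.length)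
      (ha : ∃ Mx, N.Fires M (σ'.take i ++ [σ'.get ⟨j, hj⟩]) Mx)
      (hb : ∀ (k : ℕ) (hk : k < σ'.length), i ≤ k → k < j →
        N.cluster (Sum.inr (σ'.get ⟨k, hk⟩)) ≠ N.cluster (Sum.inr (σ'.get ⟨j, hj⟩))) :
      Exp M σ ((σ'.eraseIdx j).insertIdx i (σ'.get ⟨j, hj⟩))

/-- Liveness: from every reachable marking, every transition can be enabled again. -/
def Live (M : P → ℕ) : Prop :=
  ∀ M', N.Reach M M' → ∀ t : T, ∃ M'', N.Reach M' M'' ∧ N.enabled M'' t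

/-- Boundedness. -/
def Bounded (M : P → ℕ) : Prop :=
  ∃ k, ∀ M', N.Reach M M' → ∀ p, M' p ≤ k

/-- Safety (1-boundedness). -/
def Safe (M : P → ℕ) : Prop := ∀ M', N.Reach M M' → ∀ p, M' p ≤ 1

end PetriNet

/-! Follow the path backwards from `q`, maintaining a disentangled path into `C` from the current
place. To step back over `p → t → p'`, either the cluster of `p` avoids every place of the path
from `p'`, and `p, t` is simply prepended, or it contains some place `a` of it. Then the path is
cut down to its suffix starting at `a`, and `a` is replaced by `p`: by free choice `p` feeds the transition
leaving `a`, and if `a` was the last place then `p ∈ C` because `C` is a cluster. -/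

namespace PetriNet

variable {P T : Type} {N : PetriNet P T}

open Sum

theorem InCluster.trans {x y z : P ⊕ T} (hxy : N.InCluster x y) (hyz : N.InCluster y z) :
    N.InCluster x z := by
  induction hyz with
  | refl => exact hxy
  | toTrans _ ht ih => exact .toTrans ih ht
  | toPlace _ hp ih => exact .toPlace ih hp

theorem inCluster_of_cluster_eq {x y : P ⊕ T} (h : N.cluster x = N.cluster y) :
    N.InCluster x y := by
  change y ∈ N.cluster x
  exact h ▸ InCluster.refl y

theorem IsCluster.mem_of_inCluster {C : Set (P ⊕ T)} (hC : N.IsCluster C) {x y : P ⊕ T}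
    (hx : x ∈ C) (hxy : N.InCluster x y) : y ∈ C := by
  obtain ⟨z, rfl⟩ := hC
  exact InCluster.trans hx hxy

theorem not_isDisPath_nil (ts : List T) : ¬ N.IsDisPath [] ts := by
  simp [IsDisPath]

theorem isDisPath_singleton (p : P) : N.IsDisPath [p] [] :=
  ⟨rfl, fun _ _ _ _ hi => by simp at hi, by simp⟩

theorem isDisPath_cons_cons_iff {p p' : P} {ps : List P} {t : T} {ts : List T} :
    N.IsDisPath (p :: p' :: ps) (t :: ts) ↔
      p ∈ N.pre t ∧ p' ∈ N.post t ∧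
        (∀ a ∈ p' :: ps, N.cluster (inl p) ≠ N.cluster (inl a)) ∧
        N.IsDisPath (p' :: ps) ts := by
  simp only [IsDisPath, List.length_cons, add_left_inj, List.pairwise_cons]
  constructor
  · rintro ⟨hlen, hflow, hp, hpairwise⟩
    exact ⟨(hflow 0 t p p' rfl rfl rfl).1, (hflow 0 t p p' rfl rfl rfl).2, hp,
      hlen, fun i => hflow (i + 1), hpairwise⟩
  · rintro ⟨hpt, hp't, hp, hlen, hflow, hpairwise⟩
    refine ⟨hlen, ?_, hp, hpairwise⟩
    rintro (_ | i) t' q q' hi hq hq'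
    · simp_all
    · exact hflow i t' q q' hi hq hq'

variable (N) in
def HasRootedDisPath (C : Set (P ⊕ T)) (p : P) : Prop :=
  ∃ ps ts, N.IsDisPath ps ts ∧ ps.head? = some p ∧
    ∃ r, ps.getLast? = some r ∧ inl r ∈ C

theorem hasRootedDisPath_of_mem {C : Set (P ⊕ T)} {a : P} :
    ∀ {ps : List P} {ts : List T}, N.IsDisPath ps ts →
      (∃ r, ps.getLast? = some r ∧ inl r ∈ C) → a ∈ ps → N.HasRootedDisPath C a
  | [], _, h, _, _ => absurd h (not_isDisPath_nil _)
  | b :: ps, ts, h, hroot, ha => by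
    obtain rfl | ha := List.mem_cons.1 ha
    · exact ⟨_, _, h, rfl, hroot⟩
    obtain ⟨c, ps, rfl⟩ := List.exists_cons_of_ne_nil (List.ne_nil_of_mem ha)
    obtain ⟨t, ts, rfl⟩ : ∃ t ts', ts = t :: ts' := by
      cases ts with
      | nil => simp [IsDisPath] at h
      | cons t ts' => exact ⟨t, ts', rfl⟩
    rw [List.getLast?_cons_cons] at hroot
    exact hasRootedDisPath_of_mem (isDisPath_cons_cons_iff.1 h).2.2.2 hroot ha

variable [DecidableEq P]

theorem FreeChoice.mem_pre_of_inCluster (hfc : N.FreeChoice) {p : P} {t : T}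
    (h : N.InCluster (inl p) (inr t)) : p ∈ N.pre t := by
  -- For the induction, a place of the cluster must pass `p` on to all of its output transitions.
  suffices key : ∀ y, N.InCluster (inl p) y →
      Sum.elim (fun a => ∀ t, a ∈ N.pre t → p ∈ N.pre t) (fun t => p ∈ N.pre t) y from
    key _ h
  intro y hy
  induction hy with
  | refl => exact fun _ ht => ht
  | toTrans _ ht ih => exact ih _ ht
  | @toPlace t' a _ hat' ih =>
    intro t hat
    rcases hfc t t' with hpre | hdisj
    · exact hpre ▸ ih
    · exact absurd (Finset.mem_inter.2 ⟨hat, hat'⟩) (hdisj ▸ Finset.notMem_empty a)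

theorem FreeChoice.mem_pre_of_cluster_eq (hfc : N.FreeChoice) {p a : P} {t : T}
    (h : N.cluster (inl p) = N.cluster (inl a)) (hat : a ∈ N.pre t) : p ∈ N.pre t :=
  hfc.mem_pre_of_inCluster (.toTrans (inCluster_of_cluster_eq h) hat)

theorem HasRootedDisPath.of_cluster_eq (hfc : N.FreeChoice) {C : Set (P ⊕ T)}
    (hC : N.IsCluster C) {p a : P} (hpa : N.cluster (inl p) = N.cluster (inl a))
    (ha : N.HasRootedDisPath C a) : N.HasRootedDisPath C p := by
  obtain ⟨_ | ⟨a', ps⟩, ts, h, hhead, r, hlast, hr⟩ := ha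
  · exact absurd h (not_isDisPath_nil _)
  obtain rfl : a' = a := by simpa using hhead
  cases ps with
  | nil =>
    obtain rfl : r = a' := by simpa using hlast.symm
    exact ⟨[p], [], isDisPath_singleton _, rfl, p, rfl,
      hC.mem_of_inCluster hr (inCluster_of_cluster_eq hpa.symm)⟩
  | cons b ps =>
    cases ts with
    | nil => simp [IsDisPath] at h
    | cons t ts =>
      obtain ⟨hat, hbt, ha, hrest⟩ := isDisPath_cons_cons_iff.1 h
      refine ⟨p :: b :: ps, t :: ts, ?_, rfl, r, hlast, hr⟩
      exact isDisPath_cons_cons_iff.2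
        ⟨hfc.mem_pre_of_cluster_eq hpa hat, hbt, hpa ▸ ha, hrest⟩

theorem HasRootedDisPath.of_mem_pre_of_mem_post (hfc : N.FreeChoice) {C : Set (P ⊕ T)}
    (hC : N.IsCluster C) {p p' : P} {t : T} (hpt : p ∈ N.pre t) (hp't : p' ∈ N.post t)
    (hp' : N.HasRootedDisPath C p') : N.HasRootedDisPath C p := by
  obtain ⟨_ | ⟨b, ps⟩, ts, h, hhead, hroot⟩ := hp'
  · exact absurd h (not_isDisPath_nil _)
  obtain rfl : b = p' := by simpa using hhead
  by_cases hmeet : ∃ a ∈ b :: ps, N.cluster (inl p) = N.cluster (inl a)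
  · obtain ⟨a, ha, hpa⟩ := hmeet
    exact (hasRootedDisPath_of_mem h hroot ha).of_cluster_eq hfc hC hpa
  · push Not at hmeet
    obtain ⟨r, hlast, hr⟩ := hroot
    refine ⟨p :: b :: ps, t :: ts, ?_, rfl, r, ?_, hr⟩
    · exact isDisPath_cons_cons_iff.2 ⟨hpt, hp't, hmeet, h⟩
    · rwa [List.getLast?_cons_cons]

theorem hasRootedDisPath_of_reflTransGen (hfc : N.FreeChoice) {C : Set (P ⊕ T)}
    (hC : N.IsCluster C) {p q : P} (hq : inl q ∈ C)
    (hpq : Relation.ReflTransGen N.edge (inl p) (inl q)) : N.HasRootedDisPath C p := by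
  -- For the induction, a transition on the path needs an output place with a rooted path.
  suffices key : ∀ x, Relation.ReflTransGen N.edge x (inl q) →
      Sum.elim (N.HasRootedDisPath C) (fun t => ∃ p' ∈ N.post t, N.HasRootedDisPath C p') x from
    key _ hpq
  intro x hx
  induction hx using Relation.ReflTransGen.head_induction_on with
  | refl => exact ⟨[q], [], isDisPath_singleton _, rfl, q, rfl, hq⟩
  | @head x y hxy _ ih =>
    match x, y, hxy with
    | inl p, inr t, hpt =>
      obtain ⟨p', hp't, hp'⟩ := ih
      exact hp'.of_mem_pre_of_mem_post hfc hC hpt hp't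
    | inr t, inl p', hp't => exact ⟨p', hp't, ih⟩

end PetriNet

/-- In a free-choice net, a path from a place p to a place q lying
in a cluster C yields a C-rooted disentangled path starting in p. -/
theorem exists_rooted_disentangled_path {P T : Type} [DecidableEq P]
    (N : PetriNet P T) (hfc : N.FreeChoice) (C : Set (P ⊕ T))
    (hC : N.IsCluster C) (p q : P) (hq : Sum.inl q ∈ C)
    (l : List (P ⊕ T)) (hl : l.Chain' N.edge)
    (hh : l.head? = some (Sum.inl p)) (hlast : l.getLast? = some (Sum.inl q)) :
    ∃ ps ts, N.IsDisPath ps ts ∧ ps.head? = some p ∧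
      ∃ r, ps.getLast? = some r ∧ Sum.inl r ∈ C := by
  cases l with
  | nil => simp at hh
  | cons x l =>
    obtain rfl : x = Sum.inl p := by simpa using hh
    have hpq := List.relationReflTransGen_of_exists_isChain_cons l hl
      ((List.getLast_eq_iff_getLast?_eq_some _).2 hlast)
    exact PetriNet.hasRootedDisPath_of_reflTransGen hfc hC hq hpq
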